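/- arXiv:1207.0577 — 3 statements merged into one kernel-verified Lean document; each statement's English description precedes it below -/
import Mathlib

section
/- Let h ∈ ℝ^N and let T₀ ⊂ {1,…,N}. Partition the complement T₀ᶜ into disjoint sets T₁, T₂, …, T_J where T₁ contains the indices of the l largest-magnitude entries of h restricted to T₀ᶜ, T₂ the next l largest, and so on. Then ‖h_{(T₀∪T₁)ᶜ}‖₂ ≤ Σ_{j≥2} ‖h_{T_j}‖₂ ≤ ‖h_{T₀ᶜ}‖₁ / √l. -/
def restrict {N : ℕ} (T : Finset (Fin N)) (h : Fin N → ℝ) : Fin N → ℝ :=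
  fun i => if i ∈ T then h i else 0

noncomputable def l2Norm {N : ℕ} (v : Fin N → ℝ) : ℝ := Real.sqrt (∑ i, v i ^ 2)
def l1Norm {N : ℕ} (v : Fin N → ℝ) : ℝ := ∑ i, |v i|

lemma sqrt_add_le_my (a b : ℝ) (ha : 0 ≤ a) (hb : 0 ≤ b) :
    Real.sqrt (a + b) ≤ Real.sqrt a + Real.sqrt b := by
  rw [show a + b = Real.sqrt a ^ 2 + Real.sqrt b ^ 2 by
    rw [Real.sq_sqrt ha, Real.sq_sqrt hb]]
  have h1 := Real.sqrt_nonneg a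
  have h2 := Real.sqrt_nonneg b
  calc Real.sqrt (Real.sqrt a ^ 2 + Real.sqrt b ^ 2)
      ≤ Real.sqrt ((Real.sqrt a + Real.sqrt b) ^ 2) := by
        apply Real.sqrt_le_sqrt; nlinarith
    _ = Real.sqrt a + Real.sqrt b := Real.sqrt_sq (by positivity)

lemma sqrt_sum_le_my {α : Type*} (s : Finset α) (f : α → ℝ) (hf : ∀ i ∈ s, 0 ≤ f i) :
    Real.sqrt (∑ i ∈ s, f i) ≤ ∑ i ∈ s, Real.sqrt (f i) := by
  induction s using Finset.cons_induction with
  | empty => simp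
  | cons a s ha ih =>
    rw [Finset.sum_cons, Finset.sum_cons]
    calc Real.sqrt (f a + ∑ i ∈ s, f i)
        ≤ Real.sqrt (f a) + Real.sqrt (∑ i ∈ s, f i) :=
          sqrt_add_le_my _ _ (hf a (Finset.mem_cons_self a s))
            (Finset.sum_nonneg fun i hi => hf i (Finset.mem_cons_of_mem hi))
      _ ≤ _ := by gcongr; exact ih fun i hi => hf i (Finset.mem_cons_of_mem hi)

lemma restrict_sq_sum {N : ℕ} (T : Finset (Fin N)) (h : Fin N → ℝ) :
    ∑ i, restrict T h i ^ 2 = ∑ i ∈ T, h i ^ 2 := by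
  simp [restrict, ite_pow, Finset.sum_ite_mem]

lemma restrict_abs_sum {N : ℕ} (T : Finset (Fin N)) (h : Fin N → ℝ) :
    ∑ i, |restrict T h i| = ∑ i ∈ T, |h i| := by
  simp [restrict, apply_ite abs, Finset.sum_ite_mem]

theorem stmt3 {N : ℕ} (h : Fin N → ℝ) (T₀ : Finset (Fin N)) (l J : ℕ) (hl : 1 ≤ l)
    (T : ℕ → Finset (Fin N))
    (hpart : T₀ᶜ = (Finset.Icc 1 J).biUnion T)
    (hdisj : ∀ j k, 1 ≤ j → j < k → k ≤ J → Disjoint (T j) (T k))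
    (hcard : ∀ j, 1 ≤ j → j < J → (T j).card = l)
    (hcardJ : (T J).card ≤ l)
    (horder : ∀ j, 1 ≤ j → j < J → ∀ i ∈ T (j + 1), ∀ i' ∈ T j, |h i| ≤ |h i'|) :
    l2Norm (restrict (T₀ ∪ T 1)ᶜ h) ≤ ∑ j ∈ Finset.Icc 2 J, l2Norm (restrict (T j) h) ∧
      ∑ j ∈ Finset.Icc 2 J, l2Norm (restrict (T j) h) ≤
        l1Norm (restrict T₀ᶜ h) / Real.sqrt l := by
  have hlpos : (0:ℝ) < Real.sqrt l := Real.sqrt_pos.mpr (by exact_mod_cast hl)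
  -- symmetrized disjointness
  have hdisj' : ∀ j ∈ Finset.Icc 1 J, ∀ k ∈ Finset.Icc 1 J, j ≠ k → Disjoint (T j) (T k) := by
    intro j hj k hk hne
    simp only [Finset.mem_Icc] at hj hk
    rcases lt_or_gt_of_ne hne with hlt | hgt
    · exact hdisj j k hj.1 hlt hk.2
    · exact (hdisj k j hk.1 hgt hj.2).symm
  constructor
  · -- first inequality
    have hsub : (T₀ ∪ T 1)ᶜ ⊆ (Finset.Icc 2 J).biUnion T := by
      intro i hi
      simp only [Finset.mem_compl, Finset.mem_union, not_or] at hi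
      have hi0 : i ∈ T₀ᶜ := Finset.mem_compl.mpr hi.1
      rw [hpart, Finset.mem_biUnion] at hi0
      obtain ⟨j, hj, hij⟩ := hi0
      simp only [Finset.mem_Icc] at hj
      have hj1 : j ≠ 1 := by rintro rfl; exact hi.2 hij
      exact Finset.mem_biUnion.mpr ⟨j, Finset.mem_Icc.mpr ⟨by omega, hj.2⟩, hij⟩
    have hpd : Set.PairwiseDisjoint ↑(Finset.Icc 2 J) T := by
      intro j hj k hk hne
      simp only [Finset.coe_Icc, Set.mem_Icc] at hj hk
      exact hdisj' j (Finset.mem_Icc.mpr ⟨by omega, hj.2⟩)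
        k (Finset.mem_Icc.mpr ⟨by omega, hk.2⟩) hne
    calc l2Norm (restrict (T₀ ∪ T 1)ᶜ h)
        = Real.sqrt (∑ i ∈ (T₀ ∪ T 1)ᶜ, h i ^ 2) := by rw [l2Norm, restrict_sq_sum]
      _ ≤ Real.sqrt (∑ i ∈ (Finset.Icc 2 J).biUnion T, h i ^ 2) := by
          apply Real.sqrt_le_sqrt
          exact Finset.sum_le_sum_of_subset_of_nonneg hsub (fun i _ _ => sq_nonneg _)
      _ = Real.sqrt (∑ j ∈ Finset.Icc 2 J, ∑ i ∈ T j, h i ^ 2) := by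
          rw [Finset.sum_biUnion hpd]
      _ ≤ ∑ j ∈ Finset.Icc 2 J, Real.sqrt (∑ i ∈ T j, h i ^ 2) :=
          sqrt_sum_le_my _ _ (fun j _ => Finset.sum_nonneg fun i _ => sq_nonneg _)
      _ = ∑ j ∈ Finset.Icc 2 J, l2Norm (restrict (T j) h) := by
          refine Finset.sum_congr rfl fun j _ => ?_
          rw [l2Norm, restrict_sq_sum]
  · -- second inequality
    have hblock : ∀ j ∈ Finset.Icc 2 J,
        l2Norm (restrict (T j) h) ≤ (∑ i ∈ T (j-1), |h i|) / Real.sqrt l := by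
      intro j hj
      simp only [Finset.mem_Icc] at hj
      have h1 : 1 ≤ j - 1 := by omega
      have h2 : j - 1 < J := by omega
      have hc : (T (j-1)).card = l := hcard _ h1 h2
      have hjj : j - 1 + 1 = j := by omega
      have hord := horder (j-1) h1 h2
      rw [hjj] at hord
      set S := ∑ i ∈ T (j-1), |h i| with hS
      have hSnn : 0 ≤ S := Finset.sum_nonneg fun i _ => abs_nonneg _
      have hbound : ∀ i ∈ T j, |h i| ≤ S / l := by
        intro i hi
        rw [le_div_iff₀ (by exact_mod_cast hl : (0:ℝ) < l)]
        calc |h i| * l = ∑ _i' ∈ T (j-1), |h i| := by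
              rw [Finset.sum_const, hc, nsmul_eq_mul, mul_comm]
          _ ≤ S := Finset.sum_le_sum fun i' hi' => hord i hi i' hi'
      have hcardj : (T j).card ≤ l := by
        rcases eq_or_lt_of_le hj.2 with rfl | hlt
        · exact hcardJ
        · exact le_of_eq (hcard j (by omega) hlt)
      have hsum : ∑ i ∈ T j, h i ^ 2 ≤ l * (S / l) ^ 2 := by
        calc ∑ i ∈ T j, h i ^ 2 ≤ ∑ _i ∈ T j, (S / l) ^ 2 := by
              refine Finset.sum_le_sum fun i hi => ?_
              rw [← sq_abs]
              exact pow_le_pow_left₀ (abs_nonneg _) (hbound i hi) 2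
          _ = (T j).card * (S / l) ^ 2 := by rw [Finset.sum_const, nsmul_eq_mul]
          _ ≤ l * (S / l) ^ 2 := by
              apply mul_le_mul_of_nonneg_right _ (sq_nonneg _)
              exact_mod_cast hcardj
      calc l2Norm (restrict (T j) h)
          = Real.sqrt (∑ i ∈ T j, h i ^ 2) := by rw [l2Norm, restrict_sq_sum]
        _ ≤ Real.sqrt (l * (S / l) ^ 2) := Real.sqrt_le_sqrt hsum
        _ = Real.sqrt l * (S / l) := by
            rw [Real.sqrt_mul (by positivity), Real.sqrt_sq (by positivity)]
        _ = S / Real.sqrt l := by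
            rw [eq_div_iff (ne_of_gt hlpos)]
            have : Real.sqrt l * Real.sqrt l = (l : ℝ) :=
              Real.mul_self_sqrt (by positivity)
            field_simp
            nlinarith [this]
    have hre : ∑ j ∈ Finset.Icc 2 J, (∑ i ∈ T (j-1), |h i|)
        = ∑ j ∈ Finset.Icc 1 (J-1), (∑ i ∈ T j, |h i|) := by
      apply Finset.sum_nbij' (fun j => j - 1) (fun j => j + 1) <;>
        (intro a ha; simp only [Finset.mem_Icc] at *; try omega)
    have hle : ∑ j ∈ Finset.Icc 1 (J-1), (∑ i ∈ T j, |h i|) ≤ l1Norm (restrict T₀ᶜ h) := by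
      have hpd : Set.PairwiseDisjoint ↑(Finset.Icc 1 (J-1)) T := by
        intro j hj k hk hne
        simp only [Finset.coe_Icc, Set.mem_Icc] at hj hk
        exact hdisj' j (Finset.mem_Icc.mpr ⟨hj.1, by omega⟩)
          k (Finset.mem_Icc.mpr ⟨hk.1, by omega⟩) hne
      rw [l1Norm, restrict_abs_sum, ← Finset.sum_biUnion hpd]
      apply Finset.sum_le_sum_of_subset_of_nonneg
      · intro i hi
        rw [Finset.mem_biUnion] at hi
        obtain ⟨j, hj, hij⟩ := hi
        simp only [Finset.mem_Icc] at hj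
        rw [hpart, Finset.mem_biUnion]
        exact ⟨j, Finset.mem_Icc.mpr ⟨hj.1, by omega⟩, hij⟩
      · exact fun i _ _ => abs_nonneg _
    calc ∑ j ∈ Finset.Icc 2 J, l2Norm (restrict (T j) h)
        ≤ ∑ j ∈ Finset.Icc 2 J, (∑ i ∈ T (j-1), |h i|) / Real.sqrt l :=
          Finset.sum_le_sum hblock
      _ = (∑ j ∈ Finset.Icc 1 (J-1), (∑ i ∈ T j, |h i|)) / Real.sqrt l := by
          rw [← Finset.sum_div, hre]
      _ ≤ l1Norm (restrict T₀ᶜ h) / Real.sqrt l := by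
          gcongr
end

section
/- Suppose x̂ minimizes (1/2)‖Φ̃x − ỹ‖₂² + λΔ‖x‖₁ over a feasible set containing x*, and suppose ‖Φ̃ᵀ(Φ̃x* − ỹ)‖∞ ≤ λΔ/2. Then for h = x̂ − x* and any index set T₀, ‖h_{T₀ᶜ}‖₁ ≤ 3‖h_{T₀}‖₁ + 4‖x*_{T₀ᶜ}‖₁. -/
noncomputable def linfNorm {m : ℕ} (v : Fin m → ℝ) : ℝ := ⨆ i, |v i|
noncomputable def lassoObj {Mt N : ℕ} (Φ : Matrix (Fin Mt) (Fin N) ℝ) (y : Fin Mt → ℝ)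
    (lam Δ : ℝ) (x : Fin N → ℝ) : ℝ :=
  (1 / 2) * ∑ i, (Φ.mulVec x - y) i ^ 2 + lam * Δ * l1Norm x

lemma l1_split {N : ℕ} (T : Finset (Fin N)) (v : Fin N → ℝ) :
    l1Norm v = l1Norm (restrict T v) + l1Norm (restrict Tᶜ v) := by
  unfold l1Norm restrict
  rw [← Finset.sum_add_distrib]
  apply Finset.sum_congr rfl
  intro i _
  by_cases hi : i ∈ T <;> simp [apply_ite abs, hi]

lemma l1_nonneg {N : ℕ} (v : Fin N → ℝ) : 0 ≤ l1Norm v :=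
  Finset.sum_nonneg fun i _ => abs_nonneg _

lemma l1_lower {N : ℕ} (T : Finset (Fin N)) (a b : Fin N → ℝ) :
    l1Norm (restrict T a) - l1Norm (restrict T b) ≤ l1Norm (restrict T (a - b)) := by
  unfold l1Norm restrict
  rw [← Finset.sum_sub_distrib]
  apply Finset.sum_le_sum
  intro i _
  by_cases hi : i ∈ T
  · simp only [hi, if_true, Pi.sub_apply]
    linarith [abs_sub_abs_le_abs_sub (a i) (b i)]
  · simp [hi]

lemma l1_tri {N : ℕ} (T : Finset (Fin N)) (a b : Fin N → ℝ) :
    l1Norm (restrict T (a - b)) ≤ l1Norm (restrict T a) + l1Norm (restrict T b) := by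
  unfold l1Norm restrict
  rw [← Finset.sum_add_distrib]
  apply Finset.sum_le_sum
  intro i _
  by_cases hi : i ∈ T <;> simp [hi]
  exact (abs_sub _ _)

lemma l1_restrict_symm {N : ℕ} (T : Finset (Fin N)) (a b : Fin N → ℝ) :
    l1Norm (restrict T (a - b)) = l1Norm (restrict T (b - a)) := by
  unfold l1Norm restrict
  apply Finset.sum_congr rfl
  intro i _
  by_cases hi : i ∈ T <;> simp [hi, abs_sub_comm]

theorem stmt5 {Mt N : ℕ} (Φ : Matrix (Fin Mt) (Fin N) ℝ) (y : Fin Mt → ℝ)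
    (lam Δ : ℝ) (hlam : 0 < lam) (hΔ : 0 < Δ)
    (xhat xstar : Fin N → ℝ)
    (hopt : lassoObj Φ y lam Δ xhat ≤ lassoObj Φ y lam Δ xstar)
    (hdual : linfNorm (Φ.transpose.mulVec (Φ.mulVec xstar - y)) ≤ lam * Δ / 2)
    (T₀ : Finset (Fin N)) :
    l1Norm (restrict T₀ᶜ (xhat - xstar)) ≤
      3 * l1Norm (restrict T₀ (xhat - xstar)) + 4 * l1Norm (restrict T₀ᶜ xstar) := by
  set h : Fin N → ℝ := xhat - xstar with hh
  set r : Fin Mt → ℝ := Φ.mulVec xstar - y with hr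
  set g : Fin N → ℝ := Φ.transpose.mulVec r with hg
  -- bound on each |g i|
  have hgbd : ∀ i, |g i| ≤ lam * Δ / 2 := by
    intro i
    refine le_trans ?_ hdual
    show |g i| ≤ ⨆ j, |g j|
    exact le_ciSup (f := fun j => |g j|) (Set.Finite.bddAbove (Set.finite_range _)) i
  -- inner product bound
  have hinner : -(lam * Δ / 2) * l1Norm h ≤ ∑ i, g i * h i := by
    have hs : ∑ i, -(lam * Δ / 2 * |h i|) ≤ ∑ i, g i * h i := by
      apply Finset.sum_le_sum
      intro i _
      have h1 : |g i * h i| ≤ lam * Δ / 2 * |h i| := by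
        rw [abs_mul]
        exact mul_le_mul_of_nonneg_right (hgbd i) (abs_nonneg _)
      linarith [neg_abs_le (g i * h i)]
    calc -(lam * Δ / 2) * l1Norm h = ∑ i, -(lam * Δ / 2 * |h i|) := by
          simp [l1Norm, Finset.mul_sum]
      _ ≤ _ := hs
  -- dot product identity
  have hdot : ∑ j, r j * Φ.mulVec h j = ∑ i, g i * h i := by
    have := Matrix.dotProduct_mulVec r Φ h
    simpa [dotProduct, hg, Matrix.mulVec_transpose] using this
  -- quadratic expansion
  have hquad : ∑ j, r j ^ 2 + 2 * ∑ i, g i * h i ≤ ∑ j, (Φ.mulVec xhat - y) j ^ 2 := by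
    have heq : ∀ j, (Φ.mulVec xhat - y) j = Φ.mulVec h j + r j := by
      intro j
      have := Matrix.mulVec_sub Φ xhat xstar
      have hj := congrFun this j
      simp only [hh, hr, Pi.sub_apply] at hj ⊢
      linarith [hj]
    calc ∑ j, r j ^ 2 + 2 * ∑ i, g i * h i
        = ∑ j, r j ^ 2 + 2 * ∑ j, r j * Φ.mulVec h j := by rw [hdot]
      _ ≤ ∑ j, (Φ.mulVec h j) ^ 2 + (∑ j, r j ^ 2 + 2 * ∑ j, r j * Φ.mulVec h j) := by
          nlinarith [Finset.sum_nonneg (fun j (_ : j ∈ Finset.univ) => sq_nonneg (Φ.mulVec h j))]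
      _ = ∑ j, (Φ.mulVec h j + r j) ^ 2 := by
          rw [Finset.mul_sum, ← Finset.sum_add_distrib, ← Finset.sum_add_distrib]
          apply Finset.sum_congr rfl
          intro j _
          ring
      _ = ∑ j, (Φ.mulVec xhat - y) j ^ 2 := by
          apply Finset.sum_congr rfl
          intro j _
          rw [heq j]
  -- from optimality
  have hopt' : lam * Δ * l1Norm xhat ≤ lam * Δ * l1Norm xstar + (lam * Δ / 2) * l1Norm h := by
    unfold lassoObj at hopt
    have := hinner
    linarith [hquad, hinner]
  have hld : 0 < lam * Δ := mul_pos hlam hΔ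
  have hkey : l1Norm xhat ≤ l1Norm xstar + (1 / 2) * l1Norm h := by
    have h2 : lam * Δ * l1Norm xhat ≤ lam * Δ * (l1Norm xstar + (1 / 2) * l1Norm h) := by
      rw [mul_add]
      calc lam * Δ * l1Norm xhat ≤ lam * Δ * l1Norm xstar + (lam * Δ / 2) * l1Norm h := hopt'
        _ = lam * Δ * l1Norm xstar + lam * Δ * ((1 / 2) * l1Norm h) := by ring
    exact le_of_mul_le_mul_left h2 hld
  -- splits
  have s1 := l1_split T₀ xhat
  have s2 := l1_split T₀ xstar
  have s3 := l1_split T₀ h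
  -- lower bounds
  have b1 : l1Norm (restrict T₀ xstar) - l1Norm (restrict T₀ xhat) ≤ l1Norm (restrict T₀ h) := by
    have := l1_lower T₀ xstar xhat
    rwa [l1_restrict_symm T₀ xstar xhat] at this
  have b2 : l1Norm (restrict T₀ᶜ h) ≤ l1Norm (restrict T₀ᶜ xhat) + l1Norm (restrict T₀ᶜ xstar) := by
    have := l1_tri T₀ᶜ xhat xstar
    exact this
  linarith
end

section
/- Let h ∈ ℝ^N, T₀ ⊂ {1,…,N} with |T₀| = s, and let T₁ be the set of the l largest-magnitude entries of h outside T₀; set T₀₁ = T₀ ∪ T₁. If ‖h_{T₀ᶜ}‖₁ ≤ 3‖h_{T₀}‖₁ + 4‖x*_{T₀ᶜ}‖₁, then ‖h‖₂ ≤ sqrt(1 + 9s/l) · ‖h_{T₀₁}‖₂ + 4‖x*_{T₀ᶜ}‖₁/√l. -/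
set_option maxHeartbeats 1000000

lemma le_of_sq_le' (u v : ℝ) (hu : 0 ≤ u) (hv : 0 ≤ v) (hsq : u ^ 2 ≤ v ^ 2) : u ≤ v := by
  rw [← Real.sqrt_sq hu, ← Real.sqrt_sq hv]
  exact Real.sqrt_le_sqrt hsq

lemma sum_sq_restrict {N : ℕ} (T : Finset (Fin N)) (h : Fin N → ℝ) :
    ∑ i, (restrict T h i) ^ 2 = ∑ i ∈ T, h i ^ 2 := by
  rw [← Finset.sum_subset (Finset.subset_univ T) (by intro x _ hx; simp [restrict, hx])]
  exact Finset.sum_congr rfl (by intro x hx; simp [restrict, hx])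

lemma l1_restrict {N : ℕ} (T : Finset (Fin N)) (h : Fin N → ℝ) :
    l1Norm (restrict T h) = ∑ i ∈ T, |h i| := by
  unfold l1Norm
  rw [← Finset.sum_subset (Finset.subset_univ T) (by intro x _ hx; simp [restrict, hx])]
  exact Finset.sum_congr rfl (by intro x hx; simp [restrict, hx])

lemma sqrt_aux (a x y t : ℝ) (ha : 0 ≤ a) (hx : 0 ≤ x) (hy : 0 ≤ y) (ht : 0 ≤ t)
    (htxy : t ≤ x + y) : Real.sqrt (a ^ 2 + t ^ 2) ≤ Real.sqrt (a ^ 2 + x ^ 2) + y := by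
  have h1 : Real.sqrt (a ^ 2 + t ^ 2) ≤ Real.sqrt (a ^ 2 + (x + y) ^ 2) :=
    Real.sqrt_le_sqrt (by nlinarith)
  refine h1.trans ?_
  have hs : Real.sqrt (a ^ 2 + x ^ 2) ^ 2 = a ^ 2 + x ^ 2 := Real.sq_sqrt (by positivity)
  have hxle : x ≤ Real.sqrt (a ^ 2 + x ^ 2) := by
    refine le_of_sq_le' _ _ hx (Real.sqrt_nonneg _) ?_
    rw [hs]; nlinarith
  have hrhs : 0 ≤ Real.sqrt (a ^ 2 + x ^ 2) + y := by positivity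
  rw [show Real.sqrt (a ^ 2 + x ^ 2) + y =
      Real.sqrt ((Real.sqrt (a ^ 2 + x ^ 2) + y) ^ 2) by rw [Real.sqrt_sq hrhs]]
  refine Real.sqrt_le_sqrt ?_
  nlinarith

theorem stmt6 {N : ℕ} (h xstar : Fin N → ℝ) (T₀ T₁ : Finset (Fin N)) (s l : ℕ)
    (hs : 1 ≤ s) (hl : 1 ≤ l) (hT₀ : T₀.card = s)
    (hT₁sub : T₁ ⊆ T₀ᶜ) (hT₁card : T₁.card = l)
    (hlargest : ∀ i ∈ T₀ᶜ \ T₁, ∀ i' ∈ T₁, |h i| ≤ |h i'|)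
    (hcone : l1Norm (restrict T₀ᶜ h) ≤ 3 * l1Norm (restrict T₀ h) + 4 * l1Norm (restrict T₀ᶜ xstar)) :
    l2Norm h ≤ Real.sqrt (1 + 9 * (s : ℝ) / l) * l2Norm (restrict (T₀ ∪ T₁) h) +
      4 * l1Norm (restrict T₀ᶜ xstar) / Real.sqrt l := by
  set A : Finset (Fin N) := T₀ ∪ T₁ with hA
  set a : ℝ := l2Norm (restrict A h) with ha_def
  set c : ℝ := l1Norm (restrict T₀ᶜ xstar) with hc_def
  set M : ℝ := l1Norm (restrict T₀ᶜ h) with hM_def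
  have hLpos : (0:ℝ) < l := by exact_mod_cast hl
  have hspos : (0:ℝ) < s := by exact_mod_cast hs
  have hc0 : 0 ≤ c := Finset.sum_nonneg (fun i _ => abs_nonneg _)
  have hM0 : 0 ≤ M := Finset.sum_nonneg (fun i _ => abs_nonneg _)
  have ha0 : 0 ≤ a := Real.sqrt_nonneg _
  have hasq : a ^ 2 = ∑ i ∈ A, h i ^ 2 := by
    rw [ha_def, l2Norm, Real.sq_sqrt (Finset.sum_nonneg fun i _ => sq_nonneg _),
      sum_sq_restrict]
  -- tail bound : each i in Aᶜ has |h i| ≤ M / l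
  have htail_pt : ∀ i ∈ Aᶜ, |h i| ≤ M / l := by
    intro i hi
    have hiA : i ∉ A := Finset.mem_compl.mp hi
    have hi0 : i ∈ T₀ᶜ \ T₁ := by
      simp only [hA, Finset.mem_union, not_or] at hiA
      exact Finset.mem_sdiff.mpr ⟨Finset.mem_compl.mpr hiA.1, hiA.2⟩
    have hsum : (l : ℝ) * |h i| ≤ M := by
      calc (l : ℝ) * |h i| = ∑ _i' ∈ T₁, |h i| := by
            rw [Finset.sum_const, hT₁card, nsmul_eq_mul]
        _ ≤ ∑ i' ∈ T₁, |h i'| := Finset.sum_le_sum (fun i' hi' => hlargest i hi0 i' hi')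
        _ ≤ ∑ i' ∈ T₀ᶜ, |h i'| := Finset.sum_le_sum_of_subset_of_nonneg hT₁sub
            (fun _ _ _ => abs_nonneg _)
        _ = M := (l1_restrict _ _).symm
    rw [le_div_iff₀ hLpos]
    linarith [hsum]
  have htail_l1 : ∑ i ∈ Aᶜ, |h i| ≤ M := by
    rw [hM_def, l1_restrict]
    refine Finset.sum_le_sum_of_subset_of_nonneg ?_ (fun _ _ _ => abs_nonneg _)
    intro i hi
    have hiA : i ∉ A := Finset.mem_compl.mp hi
    simp only [hA, Finset.mem_union, not_or] at hiA
    exact Finset.mem_compl.mpr hiA.1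
  have htailsq : ∑ i ∈ Aᶜ, h i ^ 2 ≤ M ^ 2 / l := by
    calc ∑ i ∈ Aᶜ, h i ^ 2 = ∑ i ∈ Aᶜ, |h i| * |h i| := by
          refine Finset.sum_congr rfl fun i _ => ?_
          rw [← abs_mul, abs_mul_self, sq]
      _ ≤ ∑ i ∈ Aᶜ, (M / l) * |h i| :=
          Finset.sum_le_sum (fun i hi => mul_le_mul_of_nonneg_right (htail_pt i hi)
            (abs_nonneg _))
      _ = (M / l) * ∑ i ∈ Aᶜ, |h i| := by rw [Finset.mul_sum]
      _ ≤ (M / l) * M := mul_le_mul_of_nonneg_left htail_l1 (by positivity)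
      _ = M ^ 2 / l := by ring
  -- Cauchy-Schwarz on T₀
  have hCS : l1Norm (restrict T₀ h) ≤ Real.sqrt s * a := by
    rw [l1_restrict]
    have h1 : (∑ i ∈ T₀, |h i|) ^ 2 ≤ (T₀.card : ℝ) * ∑ i ∈ T₀, |h i| ^ 2 := by
      exact_mod_cast sq_sum_le_card_mul_sum_sq (s := T₀) (f := fun i => |h i|)
    have h2 : ∑ i ∈ T₀, |h i| ^ 2 ≤ a ^ 2 := by
      rw [hasq]
      simp only [sq_abs]
      exact Finset.sum_le_sum_of_subset_of_nonneg Finset.subset_union_left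
        (fun _ _ _ => sq_nonneg _)
    have h3 : (∑ i ∈ T₀, |h i|) ^ 2 ≤ (s : ℝ) * a ^ 2 := by
      rw [hT₀] at h1; nlinarith
    have h4 : (Real.sqrt s * a) ^ 2 = (s:ℝ) * a ^ 2 := by
      rw [mul_pow, Real.sq_sqrt hspos.le]
    refine le_of_sq_le' _ _ (Finset.sum_nonneg (fun i _ => abs_nonneg _)) (by positivity) ?_
    rw [h4]; exact h3
  -- combine: M ≤ 3 √s a + 4 c
  have hMle : M ≤ 3 * Real.sqrt s * a + 4 * c := by
    nlinarith [hCS, hcone]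
  -- t := sqrt of tail sum
  set tsq : ℝ := ∑ i ∈ Aᶜ, h i ^ 2 with htsq_def
  have htsq0 : 0 ≤ tsq := Finset.sum_nonneg (fun i _ => sq_nonneg _)
  set t : ℝ := Real.sqrt tsq with ht_def
  have ht2 : t ^ 2 = tsq := Real.sq_sqrt htsq0
  have hsplit : l2Norm h = Real.sqrt (a ^ 2 + t ^ 2) := by
    rw [l2Norm, hasq, ht2, htsq_def, Finset.sum_add_sum_compl]
  have hsqrtl : Real.sqrt (l:ℝ) > 0 := Real.sqrt_pos.mpr hLpos
  have htle : t ≤ 3 * (Real.sqrt s / Real.sqrt l) * a + 4 * c / Real.sqrt l := by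
    have h1 : t ≤ M / Real.sqrt l := by
      rw [ht_def]
      have : tsq ≤ (M / Real.sqrt l) ^ 2 := by
        rw [div_pow, Real.sq_sqrt hLpos.le]; exact htailsq
      calc Real.sqrt tsq ≤ Real.sqrt ((M / Real.sqrt l) ^ 2) := Real.sqrt_le_sqrt this
        _ = M / Real.sqrt l := Real.sqrt_sq (by positivity)
    refine h1.trans ?_
    rw [div_le_iff₀ hsqrtl]
    have hexp : (3 * (Real.sqrt s / Real.sqrt l) * a + 4 * c / Real.sqrt l) * Real.sqrt l
        = 3 * Real.sqrt s * a + 4 * c := by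
      field_simp
    rw [hexp]
    exact hMle
  -- final: apply sqrt_aux
  set x : ℝ := 3 * (Real.sqrt s / Real.sqrt l) * a with hx_def
  set y : ℝ := 4 * c / Real.sqrt l with hy_def
  have hx0 : 0 ≤ x := by positivity
  have hy0 : 0 ≤ y := by positivity
  have ht0 : 0 ≤ t := Real.sqrt_nonneg _
  have hmain := sqrt_aux a x y t ha0 hx0 hy0 ht0 htle
  rw [hsplit]
  refine hmain.trans ?_
  have hsq2 : (Real.sqrt s / Real.sqrt l) ^ 2 = (s:ℝ) / l := by
    rw [div_pow, Real.sq_sqrt hspos.le, Real.sq_sqrt hLpos.le]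
  have hx2 : x ^ 2 = 9 * ((s:ℝ) / l) * a ^ 2 := by
    rw [hx_def, mul_pow, mul_pow, hsq2]; ring
  have hxsq : a ^ 2 + x ^ 2 = (1 + 9 * (s:ℝ) / l) * a ^ 2 := by
    rw [hx2]; ring
  have : Real.sqrt (a ^ 2 + x ^ 2) = Real.sqrt (1 + 9 * (s:ℝ) / l) * a := by
    rw [hxsq, Real.sqrt_mul (by positivity), Real.sqrt_sq ha0]
  rw [this, hy_def]
end
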